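/- arXiv:2503.20489 — 3 statements merged into one kernel-verified Lean document; each statement's English description precedes it below -/
import Mathlib

section
/- If R is a probability kernel on a standard Borel space (X, 𝒳) satisfying everywhere totality with respect to σ(R) (i.e., R_x([x]_{σ(R)}) = 1 for all x in a set G ∈ σ(R) with ν(G)=1), then R is a.e. proper with respect to σ(R): R_x(A) = δ_x(A) for all A ∈ σ(R) and all x ∈ G. -/
open MeasureTheory

/-- The σ-algebra generated by a probability kernel `R`: the smallest σ-algebra making
all maps `x ↦ R x B` (for measurable `B`) measurable. -/
def kernelSigma {X : Type*} [MeasurableSpace X] (R : X → Measure X) : MeasurableSpace X :=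
  ⨆ (B : Set X) (_ : MeasurableSet B), MeasurableSpace.comap (fun x => R x B) inferInstance

/-- The atom of `x` in a σ-algebra `m`. -/
def atomOf {X : Type*} (m : MeasurableSpace X) (x : X) : Set X :=
  ⋂₀ {A | m.MeasurableSet' A ∧ x ∈ A}

theorem stmt0 {X : Type*} [MeasurableSpace X] [StandardBorelSpace X]
    (ν : Measure X) [IsProbabilityMeasure ν]
    (R : X → Measure X) (hRp : ∀ x, IsProbabilityMeasure (R x))
    (hRm : ∀ B : Set X, MeasurableSet B → Measurable fun x => R x B)
    (G : Set X) (hG : (kernelSigma R).MeasurableSet' G) (hνG : ν G = 1)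
    (htot : ∀ x ∈ G, R x (atomOf (kernelSigma R) x) = 1) :
    ∀ x ∈ G, ∀ A : Set X, (kernelSigma R).MeasurableSet' A →
      R x A = Measure.dirac x A := by
  have hle : kernelSigma R ≤ ‹MeasurableSpace X› := by
    refine iSup_le fun B => iSup_le fun hB => ?_
    exact (hRm B hB).comap_le
  intro x hx A hA
  haveI := hRp x
  have hAmeas : MeasurableSet A := hle A hA
  by_cases hxA : x ∈ A
  · have hsub : atomOf (kernelSigma R) x ⊆ A := Set.sInter_subset_of_mem ⟨hA, hxA⟩
    have h1 : R x A = 1 := le_antisymm prob_le_one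
      ((htot x hx ▸ measure_mono hsub : (1 : ENNReal) ≤ R x A))
    rw [h1, Measure.dirac_apply' _ hAmeas, Set.indicator_of_mem hxA, Pi.one_apply]
  · have hAc : (kernelSigma R).MeasurableSet' Aᶜ := @MeasurableSet.compl X A (kernelSigma R) hA
    have hsub : atomOf (kernelSigma R) x ⊆ Aᶜ := Set.sInter_subset_of_mem ⟨hAc, hxA⟩
    have hc1 : R x Aᶜ = 1 := le_antisymm prob_le_one
      ((htot x hx ▸ measure_mono hsub : (1 : ENNReal) ≤ R x Aᶜ))
    have hsum : R x A + R x Aᶜ = 1 := by rw [measure_add_measure_compl hAmeas, measure_univ]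
    rw [hc1] at hsum
    have h0 : R x A = 0 := by
      have h' : R x A + 1 = 0 + 1 := by simpa using hsum
      exact WithTop.add_right_cancel (by exact ENNReal.one_ne_top) h'
    rw [h0, Measure.dirac_apply' _ hAmeas, Set.indicator_of_notMem hxA]
end

section
/- For any probability kernel R on a standard Borel space X, the map x ↦ R_x([x]_{σ(R)}) is σ(R)-measurable. -/
open MeasureTheory
open scoped ENNReal

/-- `R` is a regular conditional distribution for `ν` given the sub-σ-algebra `G`
(all relative to the ambient σ-algebra `mX`). -/
def IsRCD {X : Type*} [mX : MeasurableSpace X] (ν : Measure X) (R : X → Measure X)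
    (G : MeasurableSpace X) : Prop :=
  (∀ B : Set X, MeasurableSet B → Measurable[G] fun x => R x B) ∧
  (∀ A B : Set X, G.MeasurableSet' A → MeasurableSet B →
    ∫⁻ x in A, R x B ∂ν = ν (A ∩ B))

/-- `G` is countably generated under `ν`. -/
def CGUnder {X : Type*} [mX : MeasurableSpace X] (ν : Measure X)
    (G : MeasurableSpace X) : Prop :=
  ∃ C : Set X, G.MeasurableSet' C ∧ ν C = 1 ∧
    @MeasurableSpace.CountablyGenerated C (G.comap Subtype.val)

section Aux

variable {X : Type*} [mX : MeasurableSpace X]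

lemma evalMeasG (R : X → Measure X) {B : Set X} (hB : MeasurableSet B) :
    Measurable[kernelSigma R] fun x => R x B := by
  rw [measurable_iff_comap_le]
  exact le_iSup₂ (f := fun (B : Set X) (_ : MeasurableSet B) =>
    MeasurableSpace.comap (fun x => R x B) inferInstance) B hB

lemma kernelSigma_le_comap (R : X → Measure X) :
    kernelSigma R ≤ MeasurableSpace.comap R inferInstance := by
  refine iSup₂_le fun B hB => ?_
  have : (fun x => R x B) = (fun μ : Measure X => μ B) ∘ R := rfl
  rw [this, ← MeasurableSpace.comap_comp]
  exact MeasurableSpace.comap_mono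
    (measurable_iff_comap_le.mp (Measure.measurable_coe hB))

lemma atomOf_kernelSigma_eq (R : X → Measure X) (x : X) :
    atomOf (kernelSigma R) x = {y | R y = R x} := by
  apply Set.Subset.antisymm
  · intro y hy
    refine Measure.ext fun B hB => ?_
    have hmem : x ∈ (fun z => R z B) ⁻¹' {R x B} := rfl
    exact hy _ ⟨evalMeasG R hB (measurableSet_singleton (R x B)), hmem⟩
  · intro y hy A hA
    obtain ⟨hAm, hxA⟩ := hA
    obtain ⟨T, -, rfl⟩ := kernelSigma_le_comap R _ hAm
    show R y ∈ T
    rw [hy]; exact hxA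

end Aux

theorem stmt8 {X : Type*} [mX : MeasurableSpace X] [StandardBorelSpace X]
    (R : X → Measure X) (hRp : ∀ x, IsProbabilityMeasure (R x))
    (hRm : ∀ B : Set X, MeasurableSet B → Measurable fun x => R x B) :
    Measurable[kernelSigma R] fun x => R x (atomOf (kernelSigma R) x) := by
  classical
  -- a countable generating π-system for mX
  obtain ⟨t, ht⟩ := (MeasurableSpace.countable_countableGeneratingSet (α := X)).exists_eq_range
    MeasurableSpace.nonempty_countableGeneratingSet
  have htmeas : ∀ n, MeasurableSet (t n) := by
    intro n
    rw [← MeasurableSpace.generateFrom_countableGeneratingSet (α := X)]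
    exact MeasurableSpace.measurableSet_generateFrom (ht ▸ Set.mem_range_self n)
  set C : Set (Set X) := (fun F : Finset ℕ => ⋂ i ∈ F, t i) '' {F | F.Nonempty} with hC
  have hCc : C.Countable := (Set.countable_univ.mono (Set.subset_univ _)).image _
  have hCmeas : ∀ s ∈ C, MeasurableSet s := by
    rintro s ⟨F, -, rfl⟩
    exact MeasurableSet.biInter F.countable_toSet fun i _ => htmeas i
  have hCpi : IsPiSystem C := by
    rintro s ⟨F, hF, rfl⟩ u ⟨E, hE, rfl⟩ -
    refine ⟨F ∪ E, hF.mono Finset.subset_union_left, ?_⟩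
    ext z
    simp only [Set.mem_iInter, Finset.mem_union, Set.mem_inter_iff]
    constructor
    · rintro h; exact ⟨fun i hi => h i (Or.inl hi), fun i hi => h i (Or.inr hi)⟩
    · rintro ⟨h1, h2⟩ i (hi | hi); exacts [h1 i hi, h2 i hi]
  have hgen : MeasurableSpace.generateFrom C = mX := by
    apply le_antisymm
    · exact MeasurableSpace.generateFrom_le hCmeas
    · conv_lhs => rw [← MeasurableSpace.generateFrom_countableGeneratingSet (α := X)]
      refine MeasurableSpace.generateFrom_le fun s hs => ?_
      rw [ht] at hs
      obtain ⟨n, rfl⟩ := hs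
      refine MeasurableSpace.measurableSet_generateFrom ⟨{n}, ⟨n, Finset.mem_singleton_self n⟩, ?_⟩
      simp
  -- measures in the range of R are determined by their values on C
  have hdet : ∀ x y : X, (∀ s ∈ C, R x s = R y s) → R x = R y := by
    intro x y h
    haveI := hRp x
    exact ext_of_generate_finite C hgen.symm hCpi h
      (by rw [(hRp x).measure_univ, (hRp y).measure_univ])
  -- the measurable set S
  set S : Set (X × X) := ⋂ s ∈ C, {p : X × X | R p.1 s = R p.2 s} with hS
  have hSm : MeasurableSet[(kernelSigma R).prod mX] S := by
    refine MeasurableSet.biInter hCc fun s hs => ?_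
    have hf : @Measurable (X × X) ℝ≥0∞ ((kernelSigma R).prod mX) _ (fun p => R p.1 s) :=
      (evalMeasG R (hCmeas s hs)).comp (@measurable_fst X X (kernelSigma R) mX)
    have hg : @Measurable (X × X) ℝ≥0∞ ((kernelSigma R).prod mX) _ (fun p => R p.2 s) :=
      (hRm s (hCmeas s hs)).comp (@measurable_snd X X (kernelSigma R) mX)
    exact measurableSet_eq_fun hf hg
  -- the kernel
  have hRmG : @Measurable X (Measure X) (kernelSigma R) _ R :=
    @Measure.measurable_of_measurable_coe X X mX (kernelSigma R) R (fun B hB => evalMeasG R hB)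
  set κ : @ProbabilityTheory.Kernel X X (kernelSigma R) mX := @ProbabilityTheory.Kernel.mk X X (kernelSigma R) mX R hRmG
    with hκ
  haveI : @ProbabilityTheory.IsMarkovKernel X X (kernelSigma R) mX κ :=
    @ProbabilityTheory.IsMarkovKernel.mk X X (kernelSigma R) mX κ (fun x => hRp x)
  have key := @ProbabilityTheory.Kernel.measurable_kernel_prodMk_left X X (kernelSigma R) mX κ
    (by infer_instance) S hSm
  have heq : (fun x => R x (atomOf (kernelSigma R) x)) = fun a => κ a (Prod.mk a ⁻¹' S) := by
    funext x
    have : Prod.mk x ⁻¹' S = atomOf (kernelSigma R) x := by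
      rw [atomOf_kernelSigma_eq R x]
      ext y
      simp only [hS, Set.mem_preimage, Set.mem_iInter, Set.mem_setOf_eq]
      constructor
      · intro h
        exact (hdet x y h).symm
      · intro h s _
        rw [h]
    rw [this]
    rfl
  rw [heq]
  exact key
end

section
/- If R is a probability kernel satisfying everywhere self-compatibility (∫ R_y(B) R_x(dy) = R_x(B) for all x and all B ∈ 𝒳), then for each x the σ(R)-atom of x equals {y ∈ X : R_y(A) = R_x(A) for all A ∈ σ(R)}; i.e., σ(R)-atoms are determined by the restriction of R to σ(R). -/
open MeasureTheory

/-- The σ-algebra of sets on which membership of `x` and `y` agree. -/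
def agreeSigma {X : Type*} (x y : X) : MeasurableSpace X where
  MeasurableSet' := fun A => (x ∈ A ↔ y ∈ A)
  measurableSet_empty := by simp
  measurableSet_compl := fun s hs => by simp [Set.mem_compl_iff, hs]
  measurableSet_iUnion := fun f hf => by
    simp only [Set.mem_iUnion]; exact exists_congr hf

theorem stmt9 {X : Type*} [mX : MeasurableSpace X] [StandardBorelSpace X]
    (R : X → Measure X) (hRp : ∀ x, IsProbabilityMeasure (R x))
    (hRm : ∀ B : Set X, MeasurableSet B → Measurable fun x => R x B)
    (hSC : ∀ x : X, ∀ B : Set X, MeasurableSet B → ∫⁻ y, R y B ∂(R x) = R x B) :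
    ∀ x : X, atomOf (kernelSigma R) x =
      {y | ∀ A : Set X, (kernelSigma R).MeasurableSet' A → R y A = R x A} := by
  have hle : kernelSigma R ≤ mX :=
    iSup₂_le fun B hB => (hRm B hB).comap_le
  have hfm : ∀ B : Set X, MeasurableSet B → Measurable[kernelSigma R] fun z => R z B := by
    intro B hB
    exact Measurable.of_comap_le
      (le_iSup₂ (f := fun (B : Set X) (_ : MeasurableSet B) =>
        MeasurableSpace.comap (fun x => R x B) inferInstance) B hB)
  intro x
  ext y
  simp only [Set.mem_setOf_eq, atomOf, Set.mem_sInter]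
  constructor
  · intro hy A hA
    have hRB : ∀ B, MeasurableSet B → R y B = R x B := by
      intro B hB
      have hS : (kernelSigma R).MeasurableSet' ((fun z => R z B) ⁻¹' {R x B}) :=
        hfm B hB (measurableSet_singleton _)
      exact hy _ ⟨hS, rfl⟩
    rw [Measure.ext hRB]
  · intro hy
    have hRB : ∀ B, MeasurableSet B → R y B = R x B := by
      intro B hB
      have h1 : (R y).trim hle = (R x).trim hle := by
        refine @Measure.ext X (kernelSigma R) _ _ fun s hs => ?_
        rw [trim_measurableSet_eq hle hs, trim_measurableSet_eq hle hs]
        exact hy s hs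
      have h2 : ∫⁻ z, R z B ∂(R y) = ∫⁻ z, R z B ∂(R x) := by
        rw [← lintegral_trim hle (hfm B hB), ← lintegral_trim hle (hfm B hB), h1]
      rw [← hSC y B hB, ← hSC x B hB]
      exact h2
    rintro A ⟨hAm, hxA⟩
    have hle' : kernelSigma R ≤ agreeSigma x y := by
      refine iSup₂_le fun B hB => ?_
      rintro s ⟨t, _, rfl⟩
      show x ∈ _ ↔ y ∈ _
      simp [Set.mem_preimage, hRB B hB]
    exact (hle' A hAm).mp hxA
end
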